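/- Let g : (c_*, u_max) → (0, c_*) be the map sending each supersonic state u₋ to its unique Rankine–Hugoniot partner u₊ = g(u₋), characterized by ρ(g(u₋))·g(u₋) = ρ(u₋)·u₋. Then g is differentiable on (c_*, u_max), and for every u₋ ∈ (c_*, u_max), writing u₊ = g(u₋), one has g′(u₋) = ((c(u₋)² − u₋²)·u₋^{γ−2}) / ((c(u₊)² − u₊²)·u₊^{γ−2}) < 0; in particular g is strictly decreasing. -/

import Mathlib

/-! Differentiate the Rankine–Hugoniot relation `F (g u) = F u`. The mass flux satisfies
`F' = ρ (c² - u²) / c²`, which is positive at subsonic and negative at supersonic states; so `F` is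
injective on `(0, c_*)`, `g` is locally `F⁻¹ ∘ F`, and `g' (u₋) = F' (u₋) / F' (u₊)`. Since
`c² = γ ρ^(γ-1)`, the factor `ρ / c² = ρ^(2-γ) / γ = F^(2-γ) u^(γ-2) / γ`, and the common value
`F (u₋)^(2-γ) = F (u₊)^(2-γ)` cancels from the quotient. -/

open Real Set Filter Topology

/-- Maximal speed `u_max = √(2c₀²/(γ−1))`. -/
noncomputable def uMax (γ c₀ : ℝ) : ℝ := Real.sqrt (2 * c₀ ^ 2 / (γ - 1))

/-- Critical (sonic) speed `c_* = √(2c₀²/(γ+1))`. -/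
noncomputable def cStar (γ c₀ : ℝ) : ℝ := Real.sqrt (2 * c₀ ^ 2 / (γ + 1))

/-- Local sonic speed `c(u) = √(c₀² − ((γ−1)/2)u²)`. -/
noncomputable def sonic (γ c₀ u : ℝ) : ℝ := Real.sqrt (c₀ ^ 2 - (γ - 1) / 2 * u ^ 2)

/-- Density `ρ(u) = ((c₀² − ((γ−1)/2)u²)/γ)^{1/(γ−1)}`. -/
noncomputable def dens (γ c₀ u : ℝ) : ℝ :=
  ((c₀ ^ 2 - (γ - 1) / 2 * u ^ 2) / γ) ^ ((1 : ℝ) / (γ - 1))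

/-- Mass flux `F(u) = ρ(u)·u`. -/
noncomputable def flux (γ c₀ u : ℝ) : ℝ := dens γ c₀ u * u

/-- Pressure `p(u) = ρ(u)^γ`. -/
noncomputable def pres (γ c₀ u : ℝ) : ℝ := dens γ c₀ u ^ γ

theorem HasDerivAt.of_comp_eq_of_injOn {𝕜 : Type*} [NontriviallyNormedField 𝕜] [CompleteSpace 𝕜]
    {f g : 𝕜 → 𝕜} {s t : Set 𝕜} {a f'a f'b : 𝕜} (hs : s ∈ 𝓝 a) (ht : t ∈ 𝓝 (g a))
    (hgst : MapsTo g s t) (hf : InjOn f t) (hfg : ∀ x ∈ s, f (g x) = f x)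
    (hfa : HasDerivAt f f'a a) (hfb : HasStrictDerivAt f f'b (g a)) (hf'b : f'b ≠ 0) :
    HasDerivAt g (f'a / f'b) a := by
  set φ := hfb.localInverse f f'b (g a) hf'b
  have hfga : f (g a) = f a := hfg a (mem_of_mem_nhds hs)
  have hf_tendsto : Tendsto f (𝓝 a) (𝓝 (f (g a))) := hfga ▸ hfa.continuousAt.tendsto
  have hφ_tendsto : Tendsto (fun x ↦ φ (f x)) (𝓝 a) (𝓝 (g a)) := by
    have hφ_ga : φ (f (g a)) = g a := (hfb.eventually_left_inverse hf'b).self_of_nhds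
    have hφ_cont : ContinuousAt φ (f (g a)) := (hfb.to_localInverse hf'b).hasDerivAt.continuousAt
    exact hφ_ga ▸ hφ_cont.tendsto.comp hf_tendsto
  -- injectivity of `f` on `t` forces `g` to agree with the local inverse of `f` composed with `f`
  have hg_eq : g =ᶠ[𝓝 a] fun x ↦ φ (f x) := by
    filter_upwards [hs, hf_tendsto.eventually (hfb.eventually_right_inverse hf'b),
      hφ_tendsto.eventually ht] with x hxs hfφ hφt
    exact hf (hgst hxs) hφt (by rw [hfφ, hfg x hxs])
  have hφ : HasDerivAt φ f'b⁻¹ (f a) := hfga ▸ (hfb.to_localInverse hf'b).hasDerivAt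
  rw [div_eq_inv_mul]
  exact (hφ.comp a hfa).congr_of_eventuallyEq hg_eq

section IsentropicGas

variable {γ c₀ u : ℝ}

lemma lt_cStar_iff (hγ : -1 < γ) (hu : 0 ≤ u) :
    u < cStar γ c₀ ↔ u ^ 2 < c₀ ^ 2 - (γ - 1) / 2 * u ^ 2 := by
  rw [cStar, Real.lt_sqrt hu, lt_div_iff₀ (by linarith)]
  constructor <;> intro h <;> linarith

lemma cStar_lt_iff (hγ : -1 < γ) (hu : 0 ≤ u) :
    cStar γ c₀ < u ↔ c₀ ^ 2 - (γ - 1) / 2 * u ^ 2 < u ^ 2 := by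
  rw [cStar, Real.sqrt_lt (div_nonneg (by positivity) (by linarith)) hu, div_lt_iff₀ (by linarith)]
  constructor <;> intro h <;> linarith

lemma lt_uMax_iff (hγ : 1 < γ) (hu : 0 ≤ u) :
    u < uMax γ c₀ ↔ 0 < c₀ ^ 2 - (γ - 1) / 2 * u ^ 2 := by
  rw [uMax, Real.lt_sqrt hu, lt_div_iff₀ (by linarith)]
  constructor <;> intro h <;> linarith

lemma cStar_le_uMax (hγ : 1 < γ) : cStar γ c₀ ≤ uMax γ c₀ :=
  Real.sqrt_le_sqrt (div_le_div_of_nonneg_left (by positivity) (by linarith) (by linarith))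

lemma sonic_sq (h : 0 ≤ c₀ ^ 2 - (γ - 1) / 2 * u ^ 2) :
    sonic γ c₀ u ^ 2 = c₀ ^ 2 - (γ - 1) / 2 * u ^ 2 :=
  Real.sq_sqrt h

lemma flux_rpow_mul_rpow (hγ : 1 < γ) (hu : 0 < u) (hA : 0 ≤ c₀ ^ 2 - (γ - 1) / 2 * u ^ 2) :
    flux γ c₀ u ^ (2 - γ) * u ^ (γ - 2) =
      ((c₀ ^ 2 - (γ - 1) / 2 * u ^ 2) / γ) ^ ((1 : ℝ) / (γ - 1) - 1) := by
  have hB : 0 ≤ (c₀ ^ 2 - (γ - 1) / 2 * u ^ 2) / γ := div_nonneg hA (by linarith)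
  have hexp : (1 : ℝ) / (γ - 1) * (2 - γ) = 1 / (γ - 1) - 1 := by
    field_simp [(by linarith : γ - 1 ≠ 0)]; ring
  rw [flux, dens, Real.mul_rpow (Real.rpow_nonneg hB _) hu.le, ← Real.rpow_mul hB, hexp,
    mul_assoc, ← Real.rpow_add hu, sub_add_sub_cancel, sub_self, Real.rpow_zero, mul_one]

lemma hasStrictDerivAt_flux (hγ : 1 < γ) (hu : 0 < u) (hA : 0 < c₀ ^ 2 - (γ - 1) / 2 * u ^ 2) :
    HasStrictDerivAt (flux γ c₀)
      ((sonic γ c₀ u ^ 2 - u ^ 2) * u ^ (γ - 2) * (flux γ c₀ u ^ (2 - γ) / γ)) u := by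
  have hγ0 : γ - 1 ≠ 0 := by linarith
  set A := c₀ ^ 2 - (γ - 1) / 2 * u ^ 2
  set p := (1 : ℝ) / (γ - 1)
  have hB : 0 < A / γ := div_pos hA (by linarith)
  have hB' : HasStrictDerivAt (fun v ↦ (c₀ ^ 2 - (γ - 1) / 2 * v ^ 2) / γ)
      (-((γ - 1) / 2 * (2 * u)) / γ) u := by
    simpa using (((hasStrictDerivAt_pow 2 u).const_mul ((γ - 1) / 2)).const_sub (c₀ ^ 2)).div_const γ
  have hdens := (Real.hasStrictDerivAt_rpow_const_of_ne hB.ne' p).comp u hB'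
  have hpow : (A / γ) ^ p = (A / γ) ^ (p - 1) * (A / γ) := by
    rw [Real.rpow_sub_one hB.ne', div_mul_cancel₀ _ hB.ne']
  refine (hdens.mul (hasStrictDerivAt_id u)).congr_deriv ?_
  calc _ = (A - u ^ 2) * (A / γ) ^ (p - 1) / γ := by
        have hp : p * (γ - 1) = 1 := one_div_mul_cancel hγ0
        simp only [Function.comp_apply, id]
        rw [hpow]
        linear_combination (-((A / γ) ^ (p - 1) * u ^ 2 / γ)) * hp
    _ = _ := by
        rw [sonic_sq hA.le, ← flux_rpow_mul_rpow hγ hu hA.le]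
        ring

lemma flux_pos (hγ : 0 < γ) (hu : 0 < u) (hA : 0 < c₀ ^ 2 - (γ - 1) / 2 * u ^ 2) :
    0 < flux γ c₀ u :=
  mul_pos (Real.rpow_pos_of_pos (div_pos hA hγ) _) hu

lemma sonic_sq_sub_sq_pos (hγ : -1 < γ) (hu : 0 ≤ u) (h : u < cStar γ c₀) :
    0 < sonic γ c₀ u ^ 2 - u ^ 2 := by
  have hsub := (lt_cStar_iff hγ hu).1 h
  rw [sonic_sq (by nlinarith)]
  linarith

lemma sonic_sq_sub_sq_neg (hγ : 1 < γ) (h : cStar γ c₀ < u) (h' : u < uMax γ c₀) :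
    sonic γ c₀ u ^ 2 - u ^ 2 < 0 := by
  have hu : 0 ≤ u := (Real.sqrt_nonneg _).trans h.le
  rw [sonic_sq ((lt_uMax_iff hγ hu).1 h').le]
  linarith [(cStar_lt_iff (by linarith) hu).1 h]

lemma flux_deriv_pos (hγ : 1 < γ) (hu : 0 < u) (h : u < cStar γ c₀) :
    0 < (sonic γ c₀ u ^ 2 - u ^ 2) * u ^ (γ - 2) * (flux γ c₀ u ^ (2 - γ) / γ) := by
  have hA := (lt_uMax_iff hγ hu.le).1 (h.trans_le (cStar_le_uMax hγ))
  have hF := flux_pos (by linarith) hu hA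
  exact mul_pos (mul_pos (sonic_sq_sub_sq_pos (by linarith) hu.le h) (Real.rpow_pos_of_pos hu _))
    (div_pos (Real.rpow_pos_of_pos hF _) (by linarith))

lemma strictMonoOn_flux (hγ : 1 < γ) : StrictMonoOn (flux γ c₀) (Ioo 0 (cStar γ c₀)) := by
  have hderiv : ∀ u ∈ Ioo 0 (cStar γ c₀), HasStrictDerivAt (flux γ c₀)
      ((sonic γ c₀ u ^ 2 - u ^ 2) * u ^ (γ - 2) * (flux γ c₀ u ^ (2 - γ) / γ)) u := fun u hu ↦
    hasStrictDerivAt_flux hγ hu.1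
      ((lt_uMax_iff hγ hu.1.le).1 (hu.2.trans_le (cStar_le_uMax hγ)))
  refine strictMonoOn_of_deriv_pos (convex_Ioo _ _)
    (fun u hu ↦ (hderiv u hu).hasDerivAt.continuousAt.continuousWithinAt) fun u hu ↦ ?_
  rw [interior_Ioo] at hu
  rw [(hderiv u hu).hasDerivAt.deriv]
  exact flux_deriv_pos hγ hu.1 hu.2

lemma hasDerivAt_partner (hγ : 1 < γ) {g : ℝ → ℝ}
    (hg : ∀ um ∈ Ioo (cStar γ c₀) (uMax γ c₀),
      g um ∈ Ioo 0 (cStar γ c₀) ∧ flux γ c₀ (g um) = flux γ c₀ um)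
    (hum : u ∈ Ioo (cStar γ c₀) (uMax γ c₀)) :
    HasDerivAt g ((sonic γ c₀ u ^ 2 - u ^ 2) * u ^ (γ - 2) /
      ((sonic γ c₀ (g u) ^ 2 - g u ^ 2) * g u ^ (γ - 2))) u := by
  obtain ⟨hup, hflux⟩ := hg u hum
  have hu : 0 < u := (Real.sqrt_nonneg _).trans_lt hum.1
  have hA := (lt_uMax_iff hγ hu.le).1 hum.2
  have hAp := (lt_uMax_iff hγ hup.1.le).1 (hup.2.trans_le (cStar_le_uMax hγ))
  have hcancel : 0 < flux γ c₀ u ^ (2 - γ) / γ :=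
    div_pos (Real.rpow_pos_of_pos (flux_pos (by linarith) hu hA) _) (by linarith)
  have h := (hasStrictDerivAt_flux hγ hu hA).hasDerivAt.of_comp_eq_of_injOn
    (Ioo_mem_nhds hum.1 hum.2) (Ioo_mem_nhds hup.1 hup.2) (fun x hx ↦ (hg x hx).1)
    (strictMonoOn_flux hγ).injOn (fun x hx ↦ (hg x hx).2)
    (hasStrictDerivAt_flux hγ hup.1 hAp) (flux_deriv_pos hγ hup.1 hup.2).ne'
  rwa [hflux, mul_div_mul_right _ _ hcancel.ne'] at h

lemma partner_deriv_neg (hγ : 1 < γ) {um up : ℝ} (hum : um ∈ Ioo (cStar γ c₀) (uMax γ c₀))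
    (hup : up ∈ Ioo 0 (cStar γ c₀)) :
    (sonic γ c₀ um ^ 2 - um ^ 2) * um ^ (γ - 2) /
      ((sonic γ c₀ up ^ 2 - up ^ 2) * up ^ (γ - 2)) < 0 :=
  div_neg_of_neg_of_pos
    (mul_neg_of_neg_of_pos (sonic_sq_sub_sq_neg hγ hum.1 hum.2)
      (Real.rpow_pos_of_pos ((Real.sqrt_nonneg _).trans_lt hum.1) _))
    (mul_pos (sonic_sq_sub_sq_pos (by linarith) hup.1.le hup.2) (Real.rpow_pos_of_pos hup.1 _))

end IsentropicGas

theorem rankine_hugoniot_partner_derivative_general (γ c₀ : ℝ) (hγ : 1 < γ)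
    (g : ℝ → ℝ)
    (hg : ∀ um ∈ Set.Ioo (cStar γ c₀) (uMax γ c₀),
      g um ∈ Set.Ioo 0 (cStar γ c₀) ∧ dens γ c₀ (g um) * g um = dens γ c₀ um * um) :
    (∀ um ∈ Set.Ioo (cStar γ c₀) (uMax γ c₀),
      HasDerivAt g
        ((sonic γ c₀ um ^ 2 - um ^ 2) * um ^ (γ - 2) /
          ((sonic γ c₀ (g um) ^ 2 - (g um) ^ 2) * (g um) ^ (γ - 2))) um ∧
      (sonic γ c₀ um ^ 2 - um ^ 2) * um ^ (γ - 2) /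
          ((sonic γ c₀ (g um) ^ 2 - (g um) ^ 2) * (g um) ^ (γ - 2)) < 0) ∧
    StrictAntiOn g (Set.Ioo (cStar γ c₀) (uMax γ c₀)) := by
  have hderiv (um : ℝ) (hum : um ∈ Ioo (cStar γ c₀) (uMax γ c₀)) :=
    And.intro (hasDerivAt_partner hγ hg hum) (partner_deriv_neg hγ hum (hg um hum).1)
  refine ⟨hderiv, strictAntiOn_of_deriv_neg (convex_Ioo _ _)
    (fun x hx ↦ (hderiv x hx).1.continuousAt.continuousWithinAt) fun x hx ↦ ?_⟩
  rw [interior_Ioo] at hx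
  exact (hderiv x hx).1.deriv ▸ (hderiv x hx).2

/-- differentiability and strict monotonicity of the Rankine–Hugoniot partner
map `g : (c_*, u_max) → (0, c_*)`, with
`g′(u₋) = ((c(u₋)² − u₋²)u₋^{γ−2}) / ((c(u₊)² − u₊²)u₊^{γ−2}) < 0` where `u₊ = g(u₋)`. -/
theorem rankine_hugoniot_partner_derivative (γ c₀ : ℝ) (hγ : 1 < γ) (hc₀ : 0 < c₀)
    (g : ℝ → ℝ)
    (hg : ∀ um ∈ Set.Ioo (cStar γ c₀) (uMax γ c₀),
      g um ∈ Set.Ioo 0 (cStar γ c₀) ∧ dens γ c₀ (g um) * g um = dens γ c₀ um * um) :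
    (∀ um ∈ Set.Ioo (cStar γ c₀) (uMax γ c₀),
      HasDerivAt g
        ((sonic γ c₀ um ^ 2 - um ^ 2) * um ^ (γ - 2) /
          ((sonic γ c₀ (g um) ^ 2 - (g um) ^ 2) * (g um) ^ (γ - 2))) um ∧
      (sonic γ c₀ um ^ 2 - um ^ 2) * um ^ (γ - 2) /
          ((sonic γ c₀ (g um) ^ 2 - (g um) ^ 2) * (g um) ^ (γ - 2)) < 0) ∧
    StrictAntiOn g (Set.Ioo (cStar γ c₀) (uMax γ c₀)) :=
  rankine_hugoniot_partner_derivative_general γ c₀ hγ g hg
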